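/- arXiv:2102.08484 — 4 statements merged into one kernel-verified Lean document; each statement's English description precedes it below -/
import Mathlib

section
/- Suppose D : R^n × R^n ⇉ R^m satisfies the conservativity chain rule: for every absolutely continuous curve γ : [0,1] → R^n, the equality {d/dt (F∘γ)(t)} = D(γ(t), γ'(t)) holds for a.e. t ∈ (0,1), where F : R^n → R^m is locally Lipschitz. Then for every absolutely continuous curve γ : [0,1] → R^n, the equality D(γ(t), γ'(t)) = -D(γ(t), -γ'(t)) holds for a.e. t ∈ (0,1). -/
/-!
Apply the chain rule both to `γ` and to its time reversal `α t = γ (1 - t)`. At a.e. `t`,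
`α' (1 - t) = -γ' t` and `(F ∘ α)' (1 - t) = -(F ∘ γ)' t`, so
`D (γ t) (-γ' t) = {-(F ∘ γ)' t} = -D (γ t) (γ' t)`.
-/

open Filter Topology MeasureTheory

/-- A curve `γ : ℝ → E` is absolutely continuous on `[0,1]` iff it is the indefinite
integral of an integrable function (the standard characterization). -/
def AbsolutelyContinuousOn01 {E : Type*} [NormedAddCommGroup E] [NormedSpace ℝ E]
    (γ : ℝ → E) : Prop :=
  ∃ g : ℝ → E, IntegrableOn g (Set.Icc 0 1) ∧
    ∀ t ∈ Set.Icc (0 : ℝ) 1, γ t = γ 0 + ∫ s in Set.Ioc 0 t, g s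

lemma AbsolutelyContinuousOn01.comp_one_sub {E : Type*} [NormedAddCommGroup E]
    [NormedSpace ℝ E] {γ : ℝ → E} (h : AbsolutelyContinuousOn01 γ) :
    AbsolutelyContinuousOn01 (fun t => γ (1 - t)) := by
  obtain ⟨g, hg, hγ⟩ := h
  have hg01 : IntervalIntegrable g volume 0 1 :=
    (intervalIntegrable_iff_integrableOn_Icc_of_le zero_le_one).mpr hg
  have hγ' : ∀ t ∈ Set.Icc (0 : ℝ) 1, γ t = γ 0 + ∫ s in (0 : ℝ)..t, g s := fun t ht => by
    rw [intervalIntegral.integral_of_le ht.1]; exact hγ t ht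
  refine ⟨fun s => -g (1 - s), ?_, fun t ⟨ht0, ht1⟩ => ?_⟩
  · exact (intervalIntegrable_iff_integrableOn_Icc_of_le zero_le_one).mp
      (by simpa [Pi.neg_def] using (hg01.comp_sub_left 1).neg.symm)
  · have hsub : IntervalIntegrable g volume 0 (1 - t) :=
      hg01.mono_set <| by
        rw [Set.uIcc_of_le zero_le_one, Set.uIcc_of_le (by linarith)]
        exact Set.Icc_subset_Icc le_rfl (by linarith)
    rw [← intervalIntegral.integral_of_le ht0, intervalIntegral.integral_neg,
      intervalIntegral.integral_comp_sub_left g 1]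
    simp only [sub_zero]
    rw [hγ' _ ⟨by linarith, by linarith⟩, hγ' 1 ⟨zero_le_one, le_rfl⟩,
      ← intervalIntegral.integral_interval_sub_left hg01 hsub]
    abel

lemma deriv_comp_one_sub_apply_one_sub {E : Type*} [NormedAddCommGroup E] [NormedSpace ℝ E]
    (c : ℝ → E) (t : ℝ) : deriv (fun s => c (1 - s)) (1 - t) = -deriv c t := by
  rw [deriv_comp_const_sub c 1, sub_sub_cancel]

lemma ae_restrict_Ioo_zero_one_comp_one_sub {p : ℝ → Prop}
    (h : ∀ᵐ t ∂volume.restrict (Set.Ioo (0 : ℝ) 1), p t) :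
    ∀ᵐ t ∂volume.restrict (Set.Ioo (0 : ℝ) 1), p (1 - t) := by
  rw [ae_restrict_iff' measurableSet_Ioo] at h ⊢
  filter_upwards [(Measure.measurePreserving_sub_left volume 1).quasiMeasurePreserving.ae h]
    with t ht ⟨ht0, ht1⟩
  exact ht ⟨by linarith, by linarith⟩

theorem conservative_imp_symmetric_general {n m : ℕ}
    (F : EuclideanSpace ℝ (Fin n) → EuclideanSpace ℝ (Fin m))
    (D : EuclideanSpace ℝ (Fin n) → EuclideanSpace ℝ (Fin n) → Set (EuclideanSpace ℝ (Fin m)))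
    (hcons : ∀ γ : ℝ → EuclideanSpace ℝ (Fin n), AbsolutelyContinuousOn01 γ →
      ∀ᵐ t ∂(volume.restrict (Set.Ioo (0 : ℝ) 1)),
        DifferentiableAt ℝ γ t ∧ DifferentiableAt ℝ (F ∘ γ) t ∧
          D (γ t) (deriv γ t) = {deriv (F ∘ γ) t}) :
    ∀ γ : ℝ → EuclideanSpace ℝ (Fin n), AbsolutelyContinuousOn01 γ →
      ∀ᵐ t ∂(volume.restrict (Set.Ioo (0 : ℝ) 1)),
        D (γ t) (deriv γ t) = -D (γ t) (-(deriv γ t)) := by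
  intro γ hγ
  filter_upwards [hcons γ hγ,
    ae_restrict_Ioo_zero_one_comp_one_sub (hcons _ hγ.comp_one_sub)]
    with t ⟨_, _, hD⟩ ⟨_, _, hDrev⟩
  rw [sub_sub_cancel, deriv_comp_one_sub_apply_one_sub,
    show F ∘ (fun s => γ (1 - s)) = fun s => (F ∘ γ) (1 - s) from rfl,
    deriv_comp_one_sub_apply_one_sub] at hDrev
  rw [hD, hDrev, Set.neg_singleton, neg_neg]

/-- If `D` satisfies the conservativity chain rule
`{d/dt (F ∘ γ)(t)} = D(γ t, γ'(t))` for a.e. `t ∈ (0,1)` along every absolutely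
continuous curve `γ`, where `F` is locally Lipschitz, then for every absolutely
continuous curve `γ` the symmetry `D(γ t, γ'(t)) = -D(γ t, -γ'(t))` holds for a.e.
`t ∈ (0,1)`. -/
theorem conservative_imp_symmetric {n m : ℕ}
    (F : EuclideanSpace ℝ (Fin n) → EuclideanSpace ℝ (Fin m))
    (hF : LocallyLipschitz F)
    (D : EuclideanSpace ℝ (Fin n) → EuclideanSpace ℝ (Fin n) → Set (EuclideanSpace ℝ (Fin m)))
    (hcons : ∀ γ : ℝ → EuclideanSpace ℝ (Fin n), AbsolutelyContinuousOn01 γ →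
      ∀ᵐ t ∂(volume.restrict (Set.Ioo (0 : ℝ) 1)),
        DifferentiableAt ℝ γ t ∧ DifferentiableAt ℝ (F ∘ γ) t ∧
          D (γ t) (deriv γ t) = {deriv (F ∘ γ) t}) :
    ∀ γ : ℝ → EuclideanSpace ℝ (Fin n), AbsolutelyContinuousOn01 γ →
      ∀ᵐ t ∂(volume.restrict (Set.Ioo (0 : ℝ) 1)),
        D (γ t) (deriv γ t) = -D (γ t) (-(deriv γ t)) :=
  conservative_imp_symmetric_general F D hcons
end

section
/- Let F : R^n → R^m be locally Lipschitz and directionally differentiable at x. Then F admits the first-order expansion F(y) = F(x) + F'(x, y - x) + o(‖y - x‖) as y → x. -/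
open Filter Topology

set_option maxHeartbeats 1000000 in
/-- If `F` is locally Lipschitz and directionally differentiable at `x`
with directional derivative `D`, then `F(y) = F(x) + F'(x, y - x) + o(‖y - x‖)` as
`y → x`. -/
theorem first_order_expansion {n m : ℕ}
    (F : EuclideanSpace ℝ (Fin n) → EuclideanSpace ℝ (Fin m))
    (hF : LocallyLipschitz F)
    (x : EuclideanSpace ℝ (Fin n))
    (D : EuclideanSpace ℝ (Fin n) → EuclideanSpace ℝ (Fin m))
    (hD : ∀ u, Tendsto (fun t : ℝ => t⁻¹ • (F (x + t • u) - F x)) (𝓝[>] 0) (𝓝 (D u))) :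
    ∀ ε > (0 : ℝ), ∃ δ > (0 : ℝ), ∀ y : EuclideanSpace ℝ (Fin n),
      ‖y - x‖ ≤ δ → ‖F y - F x - D (y - x)‖ ≤ ε * ‖y - x‖ := by
  classical
  -- D 0 = 0
  have hD0 : D 0 = 0 := by
    have h1 : Tendsto (fun _ : ℝ => (0 : EuclideanSpace ℝ (Fin m))) (𝓝[>] (0:ℝ)) (𝓝 (D 0)) := by
      refine Tendsto.congr (fun t => ?_) (hD 0)
      simp
    exact tendsto_nhds_unique h1 tendsto_const_nhds
  -- positive homogeneity of D
  have hom : ∀ (u : EuclideanSpace ℝ (Fin n)) (s : ℝ), 0 < s → D (s • u) = s • D u := by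
    intro u s hs
    have h1 : Tendsto (fun t : ℝ => t * s) (𝓝[>] (0:ℝ)) (𝓝[>] (0:ℝ)) := by
      apply tendsto_nhdsWithin_of_tendsto_nhds_of_eventually_within
      · have h0 : Tendsto (fun t : ℝ => t * s) (𝓝 (0:ℝ)) (𝓝 (0:ℝ)) := by
          simpa using (continuous_mul_right s).tendsto (0:ℝ)
        exact h0.mono_left nhdsWithin_le_nhds
      · filter_upwards [self_mem_nhdsWithin] with t ht
        exact mul_pos ht hs
    have h2 := ((hD u).comp h1).const_smul s
    refine tendsto_nhds_unique ?_ h2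
    refine Tendsto.congr' ?_ (hD (s • u))
    filter_upwards [self_mem_nhdsWithin] with t ht
    have ht' : (t : ℝ) ≠ 0 := ne_of_gt ht
    have hs' : s ≠ 0 := ne_of_gt hs
    simp only [Function.comp_apply]
    rw [smul_comm, smul_smul, smul_smul]
    congr 2
    · field_simp
    · rw [mul_comm, mul_smul]
  -- local Lipschitz constant around x
  obtain ⟨K, s, hs, hK⟩ := hF x
  obtain ⟨r, hr, hball⟩ := Metric.mem_nhds_iff.1 hs
  -- Lipschitz bound on D for vectors of norm ≤ 2
  have hDlip : ∀ u v : EuclideanSpace ℝ (Fin n), ‖u‖ ≤ 2 → ‖v‖ ≤ 2 →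
      ‖D u - D v‖ ≤ (K : ℝ) * ‖u - v‖ := by
    intro u v hu hv
    have h := ((hD u).sub (hD v)).norm
    refine le_of_tendsto h ?_
    have hmem : Set.Ioo (0:ℝ) (r/2) ∈ 𝓝[>] (0:ℝ) :=
      Ioo_mem_nhdsGT_of_mem ⟨le_refl _, by linarith⟩
    filter_upwards [hmem] with t ht
    obtain ⟨ht0, htr⟩ := ht
    have hxu : x + t • u ∈ s := by
      apply hball
      simp only [Metric.mem_ball, dist_eq_norm]
      have h1 : ‖x + t • u - x‖ = t * ‖u‖ := by
        rw [add_sub_cancel_left, norm_smul, Real.norm_eq_abs, abs_of_pos ht0]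
      rw [h1]; nlinarith
    have hxv : x + t • v ∈ s := by
      apply hball
      simp only [Metric.mem_ball, dist_eq_norm]
      have h1 : ‖x + t • v - x‖ = t * ‖v‖ := by
        rw [add_sub_cancel_left, norm_smul, Real.norm_eq_abs, abs_of_pos ht0]
      rw [h1]; nlinarith
    have hd := hK.dist_le_mul _ hxu _ hxv
    rw [dist_eq_norm] at hd
    have heq : t⁻¹ • (F (x + t • u) - F x) - t⁻¹ • (F (x + t • v) - F x)
        = t⁻¹ • (F (x + t • u) - F (x + t • v)) := by
      rw [← smul_sub]; congr 1; abel
    rw [heq, norm_smul, Real.norm_eq_abs, abs_of_pos (inv_pos.2 ht0)]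
    have hdist : dist (x + t • u) (x + t • v) = t * ‖u - v‖ := by
      rw [dist_eq_norm]
      have h1 : x + t • u - (x + t • v) = t • (u - v) := by
        rw [smul_sub]; abel
      rw [h1, norm_smul, Real.norm_eq_abs, abs_of_pos ht0]
    rw [hdist] at hd
    calc t⁻¹ * ‖F (x + t • u) - F (x + t • v)‖ ≤ t⁻¹ * ((K:ℝ) * (t * ‖u - v‖)) :=
          mul_le_mul_of_nonneg_left hd (le_of_lt (inv_pos.2 ht0))
      _ = (K:ℝ) * ‖u - v‖ := by field_simp
  intro ε hε
  set η : ℝ := min 1 (ε / (3 * ((K:ℝ) + 1))) with hη_def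
  have hηpos : 0 < η := lt_min one_pos (by positivity)
  have hη1 : η ≤ 1 := min_le_left _ _
  have hηK : (K:ℝ) * η ≤ ε / 3 := by
    have h1 : η ≤ ε / (3 * ((K:ℝ) + 1)) := min_le_right _ _
    have hK0 : (0:ℝ) ≤ K := K.coe_nonneg
    calc (K:ℝ) * η ≤ (K:ℝ) * (ε / (3 * ((K:ℝ) + 1))) :=
          mul_le_mul_of_nonneg_left h1 hK0
      _ ≤ ε / 3 := by
          rw [mul_comm, div_mul_eq_mul_div, div_le_div_iff₀ (by positivity) (by norm_num : (0:ℝ) < 3)]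
          nlinarith
  -- finite net on the unit sphere, with centers on the sphere
  obtain ⟨T, hT⟩ := (isCompact_sphere (0 : EuclideanSpace ℝ (Fin n)) 1).elim_finite_subcover
    (fun i : Metric.sphere (0 : EuclideanSpace ℝ (Fin n)) 1 => Metric.ball (i : EuclideanSpace ℝ (Fin n)) η)
    (fun _ => Metric.isOpen_ball)
    (fun u hu => Set.mem_iUnion.2 ⟨⟨u, hu⟩, Metric.mem_ball_self hηpos⟩)
  -- the good set of t's
  have hS : ∀ᶠ t : ℝ in 𝓝[>] 0, (t < r/2 ∧ ∀ i ∈ T,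
      ‖t⁻¹ • (F (x + t • (i : EuclideanSpace ℝ (Fin n))) - F x) - D i‖ ≤ ε/3) := by
    refine Filter.Eventually.and ?_ ?_
    · exact (gt_mem_nhds (by linarith : (0:ℝ) < r/2)).filter_mono nhdsWithin_le_nhds
    · rw [Finset.eventually_all]
      intro i _
      have h := (hD i).eventually
        (Metric.closedBall_mem_nhds (D i) (by positivity : (0:ℝ) < ε/3))
      filter_upwards [h] with t ht
      rw [dist_eq_norm] at ht
      exact ht
  obtain ⟨δ, hδ0, hδ⟩ := mem_nhdsGT_iff_exists_Ioc_subset.1 hS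
  refine ⟨δ, hδ0, fun y hy => ?_⟩
  by_cases hyx : y = x
  · subst hyx; simp [hD0]
  · set t : ℝ := ‖y - x‖ with ht_def
    have ht0 : 0 < t := by
      rw [ht_def, norm_pos_iff]
      exact sub_ne_zero.2 hyx
    obtain ⟨htr, hnet⟩ := hδ ⟨ht0, hy⟩
    set u : EuclideanSpace ℝ (Fin n) := t⁻¹ • (y - x) with hu_def
    have hu_norm : ‖u‖ = 1 := by
      rw [hu_def, norm_smul, Real.norm_eq_abs, abs_of_pos (inv_pos.2 ht0), ← ht_def]
      field_simp
    have htu : t • u = y - x := by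
      rw [hu_def, smul_smul, mul_inv_cancel₀ (ne_of_gt ht0), one_smul]
    have hu_sphere : u ∈ Metric.sphere (0 : EuclideanSpace ℝ (Fin n)) 1 :=
      mem_sphere_zero_iff_norm.2 hu_norm
    obtain ⟨i, hiT, hui⟩ := Set.mem_iUnion₂.1 (hT hu_sphere)
    rw [mem_ball_iff_norm] at hui
    have hi_norm : ‖(i : EuclideanSpace ℝ (Fin n))‖ = 1 := mem_sphere_zero_iff_norm.1 i.2
    -- decomposition
    have hDyx : D (y - x) = t • D u := by rw [← htu, hom u t ht0]
    have hy_eq : y = x + t • u := by rw [htu]; abel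
    have hdecomp : F y - F x - D (y - x)
        = (F (x + t • u) - F (x + t • (i : EuclideanSpace ℝ (Fin n))))
          + t • (t⁻¹ • (F (x + t • (i : EuclideanSpace ℝ (Fin n))) - F x) - D i)
          + t • ((D i : EuclideanSpace ℝ (Fin m)) - D u) := by
      have hw : t • (t⁻¹ • (F (x + t • (i : EuclideanSpace ℝ (Fin n))) - F x) - D i)
          = F (x + t • (i : EuclideanSpace ℝ (Fin n))) - F x - t • D i := by
        rw [smul_sub, smul_smul, mul_inv_cancel₀ (ne_of_gt ht0), one_smul]
      rw [hDyx, hw, hy_eq, smul_sub]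
      abel
    rw [hdecomp]
    have hA : ‖F (x + t • u) - F (x + t • (i : EuclideanSpace ℝ (Fin n)))‖
        ≤ (K:ℝ) * (t * η) := by
      have hxu : x + t • u ∈ s := by
        apply hball
        simp only [Metric.mem_ball, dist_eq_norm]
        have h1 : ‖x + t • u - x‖ = t * ‖u‖ := by
          rw [add_sub_cancel_left, norm_smul, Real.norm_eq_abs, abs_of_pos ht0]
        rw [h1, hu_norm]; linarith
      have hxi : x + t • (i : EuclideanSpace ℝ (Fin n)) ∈ s := by
        apply hball
        simp only [Metric.mem_ball, dist_eq_norm]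
        have h1 : ‖x + t • (i : EuclideanSpace ℝ (Fin n)) - x‖ = t * ‖(i : EuclideanSpace ℝ (Fin n))‖ := by
          rw [add_sub_cancel_left, norm_smul, Real.norm_eq_abs, abs_of_pos ht0]
        rw [h1, hi_norm]; linarith
      have hd := hK.dist_le_mul _ hxu _ hxi
      rw [dist_eq_norm, dist_eq_norm] at hd
      have h1 : x + t • u - (x + t • (i : EuclideanSpace ℝ (Fin n)))
          = t • (u - (i : EuclideanSpace ℝ (Fin n))) := by
        rw [smul_sub]; abel
      rw [h1, norm_smul, Real.norm_eq_abs, abs_of_pos ht0] at hd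
      calc ‖F (x + t • u) - F (x + t • (i : EuclideanSpace ℝ (Fin n)))‖
          ≤ (K:ℝ) * (t * ‖u - (i : EuclideanSpace ℝ (Fin n))‖) := hd
        _ ≤ (K:ℝ) * (t * η) := by
            apply mul_le_mul_of_nonneg_left _ K.coe_nonneg
            exact mul_le_mul_of_nonneg_left (le_of_lt hui) (le_of_lt ht0)
    have hB : ‖t • (t⁻¹ • (F (x + t • (i : EuclideanSpace ℝ (Fin n))) - F x) - D i)‖
        ≤ t * (ε/3) := by
      rw [norm_smul, Real.norm_eq_abs, abs_of_pos ht0]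
      exact mul_le_mul_of_nonneg_left (hnet i hiT) (le_of_lt ht0)
    have hC : ‖t • ((D i : EuclideanSpace ℝ (Fin m)) - D u)‖ ≤ t * ((K:ℝ) * η) := by
      rw [norm_smul, Real.norm_eq_abs, abs_of_pos ht0]
      apply mul_le_mul_of_nonneg_left _ (le_of_lt ht0)
      calc ‖D (i : EuclideanSpace ℝ (Fin n)) - D u‖
          ≤ (K:ℝ) * ‖(i : EuclideanSpace ℝ (Fin n)) - u‖ :=
            hDlip _ _ (by rw [hi_norm]; norm_num) (by rw [hu_norm]; norm_num)
        _ ≤ (K:ℝ) * η := by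
            apply mul_le_mul_of_nonneg_left _ K.coe_nonneg
            rw [← norm_neg]
            simpa using le_of_lt hui
    calc ‖_ + _ + _‖ ≤ ‖F (x + t • u) - F (x + t • (i : EuclideanSpace ℝ (Fin n)))‖
          + ‖t • (t⁻¹ • (F (x + t • (i : EuclideanSpace ℝ (Fin n))) - F x) - D i)‖
          + ‖t • ((D i : EuclideanSpace ℝ (Fin m)) - D u)‖ := norm_add₃_le
      _ ≤ (K:ℝ) * (t * η) + t * (ε/3) + t * ((K:ℝ) * η) := by
          gcongr
      _ ≤ ε * t := by nlinarith [K.coe_nonneg, le_of_lt ht0, hηK]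
      _ = ε * ‖y - x‖ := by rw [ht_def]
end

section
/- Let γ : [0,1] → R^n be absolutely continuous, F : R^n → R^m locally Lipschitz and directionally differentiable everywhere with F'(x,-u) = -F'(x,u) for all x,u. Then for a.e. t ∈ (0,1), the composition F∘γ is differentiable at t and d/dt (F∘γ)(t) = F'(γ(t), γ'(t)). -/
/-!
By the Lebesgue differentiation theorem, `γ` is differentiable at almost every `t`. At such a
`t`, oddness of `F'(x, ·)` turns the one-sided directional derivative along `γ'(t)` into a
two-sided one, and the local Lipschitz bound
`‖F (γ (t + h)) - F (γ t + h • γ'(t))‖ ≤ K ‖γ (t + h) - γ t - h • γ'(t)‖ = o(h)`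
transfers differentiability from the line `h ↦ F (γ t + h • γ'(t))` to the curve `F ∘ γ`.
-/

open Filter Topology MeasureTheory

theorem AbsolutelyContinuousOn01.ae_hasDerivAt {E : Type*} [NormedAddCommGroup E]
    [NormedSpace ℝ E] [CompleteSpace E] {γ : ℝ → E} (hγ : AbsolutelyContinuousOn01 γ) :
    ∀ᵐ t ∂volume.restrict (Set.Ioo 0 1), HasDerivAt γ (deriv γ t) t := by
  obtain ⟨g, hg, hγg⟩ := hγ
  have hint : IntervalIntegrable g volume 0 1 :=
    (intervalIntegrable_iff_integrableOn_Icc_of_le zero_le_one).2 hg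
  filter_upwards [ae_restrict_of_ae hint.ae_hasDerivAt_integral,
    ae_restrict_mem measurableSet_Ioo] with t hderiv ht
  have hγ_eq : γ =ᶠ[𝓝 t] fun x ↦ γ 0 + ∫ s in 0..x, g s := by
    filter_upwards [Ioo_mem_nhds ht.1 ht.2] with x hx
    rw [intervalIntegral.integral_of_le hx.1.le]
    exact hγg x (Set.Ioo_subset_Icc_self hx)
  rw [Set.uIcc_of_le zero_le_one] at hderiv
  have hγ' := (hderiv (Set.Ioo_subset_Icc_self ht) 0 (by simp)).const_add (γ 0)
  exact (hγ'.congr_of_eventuallyEq hγ_eq).differentiableAt.hasDerivAt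

section LineDeriv

variable {E F : Type*} [NormedAddCommGroup E] [NormedSpace ℝ E]
  [NormedAddCommGroup F] [NormedSpace ℝ F]

theorem hasLineDerivAt_of_tendsto_slope_zero_right {f : E → F} {f' : F} {x v : E}
    (h : Tendsto (fun t : ℝ ↦ t⁻¹ • (f (x + t • v) - f x)) (𝓝[>] 0) (𝓝 f'))
    (hneg : Tendsto (fun t : ℝ ↦ t⁻¹ • (f (x + t • -v) - f x)) (𝓝[>] 0) (𝓝 (-f'))) :
    HasLineDerivAt ℝ f f' x v := by
  rw [hasLineDerivAt_iff_tendsto_slope_zero, ← nhdsLT_sup_nhdsGT, tendsto_sup]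
  refine ⟨?_, h⟩
  have hflip : Tendsto (fun t : ℝ ↦ -t) (𝓝[<] 0) (𝓝[>] 0) := by
    simpa using tendsto_neg_nhdsLT_neg (a := (0 : ℝ))
  have hleft := hneg.neg.comp hflip
  rw [neg_neg] at hleft
  refine hleft.congr fun t ↦ ?_
  simp [smul_neg, neg_smul, inv_neg]

theorem HasLineDerivAt.hasDerivAt_comp_of_lipschitzOnWith {f : E → F} {f' : F} {γ : ℝ → E}
    {t : ℝ} {v : E} {K : NNReal} {s : Set E} (hf : HasLineDerivAt ℝ f f' (γ t) v)
    (hγ : HasDerivAt γ v t) (hs : s ∈ 𝓝 (γ t)) (hlip : LipschitzOnWith K f s) :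
    HasDerivAt (f ∘ γ) f' t := by
  have hline : HasDerivAt (fun y ↦ f (γ t + (y - t) • v)) f' t :=
    HasDerivAt.comp_sub_const (f := fun r ↦ f (γ t + r • v)) t t (by rwa [sub_self])
  have hmem : ∀ᶠ y in 𝓝 t, γ y ∈ s ∧ γ t + (y - t) • v ∈ s := by
    refine (hγ.continuousAt.eventually_mem hs).and (ContinuousAt.eventually_mem ?_ (by simpa))
    fun_prop
  have herr : HasDerivAt (fun y ↦ f (γ y) - f (γ t + (y - t) • v)) 0 t := by
    rw [hasDerivAt_iff_isLittleO]
    refine (Asymptotics.IsBigO.of_bound K ?_).trans_isLittleO (hasDerivAt_iff_isLittleO.1 hγ)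
    filter_upwards [hmem] with y ⟨hy, hy'⟩
    simpa [dist_eq_norm, sub_sub] using hlip.dist_le_mul _ hy _ hy'
  convert herr.add hline using 1
  · ext y; simp
  · simp

end LineDeriv

/-- Let `γ : [0,1] → ℝⁿ` be absolutely continuous and `F` locally
Lipschitz and directionally differentiable everywhere, with `F'(x,-u) = -F'(x,u)`.
Then for a.e. `t ∈ (0,1)` the composition `F ∘ γ` is differentiable at `t` with
`d/dt (F ∘ γ)(t) = F'(γ t, γ'(t))`. -/
theorem chain_rule_ae {n m : ℕ}
    (γ : ℝ → EuclideanSpace ℝ (Fin n)) (hγ : AbsolutelyContinuousOn01 γ)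
    (F : EuclideanSpace ℝ (Fin n) → EuclideanSpace ℝ (Fin m))
    (hF : LocallyLipschitz F)
    (D' : EuclideanSpace ℝ (Fin n) → EuclideanSpace ℝ (Fin n) → EuclideanSpace ℝ (Fin m))
    (hD' : ∀ x u, Tendsto (fun t : ℝ => t⁻¹ • (F (x + t • u) - F x)) (𝓝[>] 0) (𝓝 (D' x u)))
    (hodd : ∀ x u, D' x (-u) = -D' x u) :
    ∀ᵐ t ∂(volume.restrict (Set.Ioo (0 : ℝ) 1)),
      HasDerivAt (F ∘ γ) (D' (γ t) (deriv γ t)) t := by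
  filter_upwards [hγ.ae_hasDerivAt] with t hγt
  obtain ⟨K, s, hs, hlip⟩ := hF (γ t)
  have hline : HasLineDerivAt ℝ F (D' (γ t) (deriv γ t)) (γ t) (deriv γ t) :=
    hasLineDerivAt_of_tendsto_slope_zero_right (hD' _ _) (hodd (γ t) _ ▸ hD' _ _)
  exact hline.hasDerivAt_comp_of_lipschitzOnWith hγt hs hlip
end

section
/- Suppose D(x,u) = J(x)u with J(x) ⊆ {A ∈ R^{m×n} : A_i ∈ ∂_i(x) + N_M(x) for each row i} whenever x ∈ M, for a finite partition of R^n into C^1 manifolds, and suppose that for each x ∈ M and u ∈ T_M(x) one has {F'(x,u)} = {Au : A_i ∈ ∂_i(x) + N_M(x)}. Then for any absolutely continuous curve γ : [0,1] → R^n such that for a.e. t, γ'(t) ∈ T_{M_t}(γ(t)) where M_t is the partition cell containing γ(t), and such that d/dt(F∘γ)(t) = F'(γ(t), γ'(t)) a.e., we have D(γ(t), γ'(t)) ⊆ {d/dt (F∘γ)(t)} for a.e. t ∈ (0,1). -/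
open Filter Topology MeasureTheory RealInnerProductSpace
open scoped Pointwise

/-- stratified subdifferential implies conservativity, with the
stratification and chain-rule hypotheses explicit.
`ℝⁿ` is partitioned into finitely many `C¹` manifolds `M i` (index `ι` finite), with
tangent spaces `T i x` and normal spaces `(T i x)ᗮ`.  `∂ k x ⊆ ℝⁿ` are nonempty sets
(the Clarke subdifferentials of the components `F k`).  A matrix `A` has its `k`-th
row in `∂ k x + N_M(x)` when `∃ r ∈ ∂ k x + (T i x)ᗮ` with `⟨r, ·⟩ = (A ·) k`.
Assume `J x` consists of such matrices whenever `x ∈ M i`, that for `x ∈ M i` and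
`u ∈ T i x` one has `{F'(x,u)} = {A u : each row A_k ∈ ∂ k x + N}`, and let `γ` be an
absolutely continuous curve such that for a.e. `t`, `γ'(t)` is tangent to the cell
containing `γ t` and the chain rule `d/dt (F ∘ γ)(t) = F'(γ t, γ'(t))` holds.
Then `D(γ t, γ'(t)) = J(γ t) γ'(t) ⊆ {d/dt (F ∘ γ)(t)}` for a.e. `t ∈ (0,1)`. -/
theorem stratified_subdifferential_implies_conservative {n m : ℕ} {ι : Type*} [Finite ι]
    (F : EuclideanSpace ℝ (Fin n) → EuclideanSpace ℝ (Fin m))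
    (hF : LocallyLipschitz F)
    (F' : EuclideanSpace ℝ (Fin n) → EuclideanSpace ℝ (Fin n) → EuclideanSpace ℝ (Fin m))
    (hF' : ∀ x u, Tendsto (fun t : ℝ => t⁻¹ • (F (x + t • u) - F x)) (𝓝[>] 0) (𝓝 (F' x u)))
    (M : ι → Set (EuclideanSpace ℝ (Fin n)))
    (hpart : ∀ x, ∃! i : ι, x ∈ M i)
    (T : ι → EuclideanSpace ℝ (Fin n) → Submodule ℝ (EuclideanSpace ℝ (Fin n)))
    (Sub : Fin m → EuclideanSpace ℝ (Fin n) → Set (EuclideanSpace ℝ (Fin n)))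
    (hSub : ∀ k x, (Sub k x).Nonempty)
    (J : EuclideanSpace ℝ (Fin n) →
      Set (EuclideanSpace ℝ (Fin n) →L[ℝ] EuclideanSpace ℝ (Fin m)))
    (hJ : ∀ (i : ι), ∀ x ∈ M i, ∀ A ∈ J x, ∀ k : Fin m,
      ∃ r ∈ Sub k x + ((T i x)ᗮ : Set (EuclideanSpace ℝ (Fin n))),
        ∀ u, A u k = ⟪r, u⟫)
    (hstrat : ∀ (i : ι), ∀ x ∈ M i, ∀ u ∈ T i x,
      ({F' x u} : Set (EuclideanSpace ℝ (Fin m))) =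
        {v | ∃ A : EuclideanSpace ℝ (Fin n) →L[ℝ] EuclideanSpace ℝ (Fin m),
          (∀ k : Fin m, ∃ r ∈ Sub k x + ((T i x)ᗮ : Set (EuclideanSpace ℝ (Fin n))),
            ∀ w, A w k = ⟪r, w⟫) ∧ v = A u})
    (γ : ℝ → EuclideanSpace ℝ (Fin n)) (hγ : AbsolutelyContinuousOn01 γ)
    (htan : ∀ᵐ t ∂(volume.restrict (Set.Ioo (0 : ℝ) 1)),
      DifferentiableAt ℝ γ t ∧ ∀ i : ι, γ t ∈ M i → deriv γ t ∈ T i (γ t))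
    (hchain : ∀ᵐ t ∂(volume.restrict (Set.Ioo (0 : ℝ) 1)),
      HasDerivAt (F ∘ γ) (F' (γ t) (deriv γ t)) t) :
    ∀ᵐ t ∂(volume.restrict (Set.Ioo (0 : ℝ) 1)),
      {v | ∃ A ∈ J (γ t), v = A (deriv γ t)} ⊆ {deriv (F ∘ γ) t} := by
  filter_upwards [htan, hchain] with t ⟨_, htan'⟩ hch
  rintro v ⟨A, hA, rfl⟩
  obtain ⟨i, hi, -⟩ := hpart (γ t)
  have hmem : A (deriv γ t) ∈
      {v | ∃ B : EuclideanSpace ℝ (Fin n) →L[ℝ] EuclideanSpace ℝ (Fin m),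
        (∀ k : Fin m, ∃ r ∈ Sub k (γ t) + ((T i (γ t))ᗮ : Set (EuclideanSpace ℝ (Fin n))),
          ∀ w, B w k = ⟪r, w⟫) ∧ v = B (deriv γ t)} :=
    ⟨A, hJ i (γ t) hi A hA, rfl⟩
  rw [← hstrat i (γ t) hi (deriv γ t) (htan' i hi)] at hmem
  simp only [Set.mem_singleton_iff] at hmem ⊢
  rw [hmem, ← hch.deriv]
end
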